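/- Let ν ∈ H⁺ with ν(ℳ) > 0, let σ : ℳ → [0,∞) be Borel, and let S be the multiplicative selective cost S(g) := 1 − exp(−∫_ℳ σ dg). Then there exists an equilibrium ρ ∈ H⁺ (i.e. ν(A) = ∫_A F_ρ dρ for every Borel A ⊆ ℳ) if and only if ∫_ℳ (1 − e^{−σ(m)})^{−1} ν(dm) < ∞ and ν(ℳ) ≤ e^{−1}. Moreover, when these two conditions hold, for every c > 0 with c·e^{−c} = ν(ℳ), the measure ρ defined by ρ(A) := ∫_A e^{c}·(1 − e^{−σ(m)})^{−1} ν(dm) is an equilibrium. -/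

import Mathlib

open MeasureTheory Set Filter
open scoped ENNReal NNReal

noncomputable section

namespace MSEW

/-- `LipLE dE f c` : the bounded-Lipschitz norm of `f`, namely
`sup_x |f x| + sup_{x ≠ y} |f x - f y| / dE x y`, is at most `c`;
phrased without suprema, relative to an abstract distance function `dE`. -/
def LipLE {E : Type*} (dE : E → E → ℝ) (f : E → ℝ) (c : ℝ) : Prop :=
  ∃ a b : ℝ, 0 ≤ a ∧ 0 ≤ b ∧ a + b ≤ c ∧ (∀ x, |f x| ≤ a) ∧
    ∀ x y, |f x - f y| ≤ b * dE x y

/-- Integral of `f : E → ℝ` against a finite integer-valued measure, represented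
as the multiset of its atoms (a genotype). -/
def gInt {E : Type*} (g : Multiset E) (f : E → ℝ) : ℝ := (g.map f).sum

/-- The mass `g(A)` that a genotype `g` assigns to a set `A`. -/
def gMass {E : Type*} (g : Multiset E) (A : Set E) : ℝ := gInt g (A.indicator 1)

/-- The σ-algebra on genotypes generated by the counting functionals
`g ↦ g(A)` for measurable `A`. -/
instance multisetMeasurableSpace {E : Type*} [MeasurableSpace E] :
    MeasurableSpace (Multiset E) :=
  MeasurableSpace.generateFrom
    { s | ∃ (A : Set E) (n : ℕ), MeasurableSet A ∧ s = { g : Multiset E | gMass g A = n } }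

/-- Wasserstein distance between two (finite) measures: the supremum of
differences of integrals of test functions of bounded-Lipschitz norm at most one. -/
def wasDist {E : Type*} [MeasurableSpace E] (dE : E → E → ℝ) (P Q : Measure E) : ℝ :=
  sSup { r | ∃ f : E → ℝ, LipLE dE f 1 ∧ r = |∫ x, f x ∂P - ∫ x, f x ∂Q| }

/-- Wasserstein norm of a finite signed measure, `sup { |∫ f dπ| : ‖f‖_Lip ≤ 1 }`. -/
def wasNorm {E : Type*} [MeasurableSpace E] (dE : E → E → ℝ) (π : SignedMeasure E) : ℝ :=
  wasDist dE π.toJordanDecomposition.posPart π.toJordanDecomposition.negPart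

/-- The Wasserstein metric on genotypes, `d(g,h) = ‖g - h‖_Was`. -/
def dG {M : Type*} [MetricSpace M] (g h : Multiset M) : ℝ :=
  sSup { r | ∃ f : M → ℝ, LipLE dist f 1 ∧ r = |gInt g f - gInt h f| }

/-- The measure on `E` associated with a genotype: the finite sum of Dirac masses. -/
def genMeasure {E : Type*} [MeasurableSpace E] (g : Multiset E) : Measure E :=
  (g.map fun x => Measure.dirac x).sum

/-- The intensity measure `μP` of a law `P` on genotypes: `μP(A) = ∫ g(A) dP(g)`. -/
def intensity {E : Type*} [MeasurableSpace E] (P : Measure (Multiset E)) : Measure E :=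
  P.bind genMeasure

/-- The law `Π_π` of a Poisson random measure with intensity `π`:
`Π_π[F] = e^{-π(univ)} ∑_k (1/k!) ∫ F(δ_{x₁}+⋯+δ_{x_k}) dπ^{⊗k}`. -/
def poissonLaw {M : Type*} [MeasurableSpace M] (π : Measure M) : Measure (Multiset M) :=
  ENNReal.ofReal (Real.exp (-(π Set.univ).toReal)) •
    Measure.sum fun k : ℕ =>
      ((Nat.factorial k : ℝ≥0∞))⁻¹ •
        Measure.map (fun x : Fin k → M => ∑ i, ({x i} : Multiset M))
          (Measure.pi fun _ : Fin k => π)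

/-- A selective cost with Lipschitz constant `K`: a Borel function
`S : 𝒢 → [0,∞)` with `S(0) = 0`, monotone under adding mutations, and
Lipschitz with constant `K` for the Wasserstein metric on genotypes. -/
structure IsSelectiveCost {M : Type*} [MetricSpace M] [MeasurableSpace M]
    (S : Multiset M → ℝ) (K : ℝ) : Prop where
  measurable : Measurable S
  nonneg : ∀ g, 0 ≤ S g
  map_zero : S 0 = 0
  mono : ∀ g h, S g ≤ S (g + h)
  lip : ∀ g h, |S g - S h| ≤ K * dG g h

/-- `F_π(x) = E[S(X^π + δ_x) - S(X^π)]`. -/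
def Fcost {M : Type*} [MeasurableSpace M] (S : Multiset M → ℝ) (π : Measure M) (x : M) : ℝ :=
  ∫ g, (S (g + {x}) - S g) ∂(poissonLaw π)

/-- The kernel `K_ρ(m,m') = E[S(X^ρ+δ_m+δ_{m'}) - S(X^ρ+δ_{m'}) - S(X^ρ+δ_m) + S(X^ρ)]`. -/
def Kker {M : Type*} [MeasurableSpace M] (S : Multiset M → ℝ) (ρ : Measure M)
    (m m' : M) : ℝ :=
  ∫ g, (S (g + {m} + {m'}) - S (g + {m'}) - S (g + {m}) + S g) ∂(poissonLaw ρ)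

/-- The operator `D`: `Dπ` is the measure with density `F_π` with respect to `π`. -/
def Dop {M : Type*} [MeasurableSpace M] (S : Multiset M → ℝ) (ρ : Measure M) : Measure M :=
  ρ.withDensity fun x => ENNReal.ofReal (Fcost S ρ x)

/-- Concavity of a selective cost. -/
def ConcaveCost {M : Type*} (S : Multiset M → ℝ) : Prop :=
  ∀ g h k : Multiset M, S (g + h + k) - S (g + h) ≤ S (g + k) - S g

/-- A solution of the mutation–selection dynamics
`ρ_t(A) = ρ₀(A) + t·ν(A) - ∫₀ᵗ (Dρ_s)(A) ds`: a `‖⋅‖_Was`-continuous curve of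
finite nonnegative measures satisfying the integral equation for `t ≥ 0`. -/
def IsSolution {M : Type*} [MetricSpace M] [MeasurableSpace M]
    (S : Multiset M → ℝ) (ν ρ₀ : Measure M) (ρ : ℝ → Measure M) : Prop :=
  (∀ t, IsFiniteMeasure (ρ t)) ∧ ρ 0 = ρ₀ ∧
  (∀ t, 0 ≤ t → ∀ ε > (0:ℝ), ∃ δ > (0:ℝ), ∀ s, 0 ≤ s → |s - t| < δ →
     wasDist dist (ρ s) (ρ t) < ε) ∧
  ∀ t, 0 ≤ t → ∀ A : Set M, MeasurableSet A →
    ((ρ t) A).toReal = (ρ₀ A).toReal + t * (ν A).toReal -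
      ∫ s in (0:ℝ)..t, ((Dop S (ρ s)) A).toReal

/-- The mutation operator `𝔐_n`: add an independent Poisson cloud of new
mutations with intensity `ν/n`. -/
def mutOp {M : Type*} [MeasurableSpace M] (ν : Measure M) (n : ℕ)
    (P : Measure (Multiset M)) : Measure (Multiset M) :=
  Measure.map (fun p : Multiset M × Multiset M => p.1 + p.2)
    (P.prod (poissonLaw (((n : ℝ≥0∞))⁻¹ • ν)))

/-- The selection operator `𝔖_n`: reweight by `e^{-S/n}` and renormalize. -/
def selOp {M : Type*} [MeasurableSpace M] (S : Multiset M → ℝ) (n : ℕ)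
    (P : Measure (Multiset M)) : Measure (Multiset M) :=
  (∫⁻ g, ENNReal.ofReal (Real.exp (-S g / (n : ℝ))) ∂P)⁻¹ •
    P.withDensity fun g => ENNReal.ofReal (Real.exp (-S g / (n : ℝ)))

/-- The complete Poissonization operator `𝔓P = Π_{μP}`. -/
def poisOp {M : Type*} [MeasurableSpace M] (P : Measure (Multiset M)) :
    Measure (Multiset M) :=
  poissonLaw (intensity P)

/-- Restriction `g_B` of a genotype to a set: `g_B(A) = g(A ∩ B)`. -/
def restrictMS {M : Type*} (g : Multiset M) (B : Set M) : Multiset M :=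
  @Multiset.filter M (· ∈ B) (Classical.decPred _) g

/-- The random segregating set determined by a jointly measurable indicator. -/
def segSet {Ω M : Type*} (χ : Ω × M → Bool) (ω : Ω) : Set M :=
  { x | χ (ω, x) = true }

/-- The recombination operator `ℛ`. -/
def recOp {M Ω : Type*} [MeasurableSpace M] [MeasurableSpace Ω]
    (Pr : Measure Ω) (R : Ω → Set M) (P : Measure (Multiset M)) : Measure (Multiset M) :=
  Measure.map (fun q : Ω × Multiset M × Multiset M =>
      restrictMS q.2.1 (R q.1) + restrictMS q.2.2 ((R q.1)ᶜ))
    (Pr.prod (P.prod P))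

/-- Symmetry of a recombination mechanism: the segregating set and its
complement are identically distributed as random sets. -/
def IsSymmetricMech {M Ω : Type*} [MeasurableSpace M] [MeasurableSpace Ω]
    (Pr : Measure Ω) (R : Ω → Set M) : Prop :=
  ∀ lam : Measure M, IsFiniteMeasure lam → ∀ (p : ℕ) (B : Fin p → Set M),
    (∀ i, MeasurableSet (B i)) →
    Measure.map (fun ω => fun i => (lam (B i ∩ R ω)).toReal) Pr =
    Measure.map (fun ω => fun i => (lam (B i ∩ (R ω)ᶜ)).toReal) Pr

/-- `(ℛ, λ)` is shattering with constant `α`: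
`λ(A)³ ≤ 2α·E[λ(A ∩ R)·λ(A ∩ Rᶜ)]` for every Borel `A`. -/
def IsShattering {M Ω : Type*} [MeasurableSpace M] [MeasurableSpace Ω]
    (Pr : Measure Ω) (R : Ω → Set M) (lam : Measure M) (α : ℝ) : Prop :=
  ∀ A : Set M, MeasurableSet A →
    (lam A).toReal ^ 3 ≤
      2 * α * ∫ ω, (lam (A ∩ R ω)).toReal * (lam (A ∩ (R ω)ᶜ)).toReal ∂Pr

variable {M : Type*} [MetricSpace M] [CompleteSpace M] [TopologicalSpace.SeparableSpace M]
  [MeasurableSpace M] [BorelSpace M]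

/-- The multiplicative selective cost `S(g) = 1 - exp(-∫ σ dg)`. -/
def multCost {M : Type*} (σc : M → ℝ) (g : Multiset M) : ℝ :=
  1 - Real.exp (-(gInt g σc))
/-!
For the multiplicative cost, adding a mutation at `x` to `g` changes the cost by
`(1 - e^{-σ x}) e^{-∫ σ dg}`, and the Laplace functional of the Poisson law gives
`E[e^{-∫ σ dX^ρ}] = e^{-t}` with `t = ∫ (1 - e^{-σ}) dρ`. Hence `Dρ = e^{-t} (1 - e^{-σ}) ρ`,
so an equilibrium `ν = Dρ` has total mass `t e^{-t} ≤ e^{-1}` and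
`∫ (1 - e^{-σ})⁻¹ dν ≤ e^{-t} ρ(ℳ) < ∞`. Conversely `ρ = e^c (1 - e^{-σ})⁻¹ ν` has
`t = e^c ν(ℳ) = c`, so `Dρ = e^{-c} e^c ν = ν`.
-/

section Genotype

variable {E : Type*}

lemma gInt_add (g h : Multiset E) (f : E → ℝ) : gInt (g + h) f = gInt g f + gInt h f := by
  simp [gInt]

lemma gInt_singleton (a : E) (f : E → ℝ) : gInt ({a} : Multiset E) f = f a := by
  simp [gInt]

lemma gInt_finsetSum {ι : Type*} (s : Finset ι) (g : ι → Multiset E) (f : E → ℝ) :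
    gInt (∑ i ∈ s, g i) f = ∑ i ∈ s, gInt (g i) f :=
  map_sum (Multiset.sumAddMonoidHom.comp (Multiset.mapAddMonoidHom f)) g s

lemma gInt_nonneg (g : Multiset E) {f : E → ℝ} (hf : ∀ x, 0 ≤ f x) : 0 ≤ gInt g f :=
  Multiset.sum_nonneg fun _ hx => by
    obtain ⟨a, -, rfl⟩ := Multiset.mem_map.1 hx
    exact hf a

open Classical in
lemma gMass_eq_countP (g : Multiset E) (A : Set E) : gMass g A = g.countP (· ∈ A) := by
  induction g using Multiset.induction_on with
  | empty => simp [gMass, gInt]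
  | cons a g ih =>
    by_cases ha : a ∈ A <;> simp_all [gMass, gInt, add_comm]

variable [MeasurableSpace E]

lemma genMeasure_cons (a : E) (g : Multiset E) :
    genMeasure (a ::ₘ g) = Measure.dirac a + genMeasure g := by
  simp [genMeasure]

lemma lintegral_genMeasure (g : Multiset E) {f : E → ℝ≥0∞} (hf : Measurable f) :
    ∫⁻ x, f x ∂genMeasure g = (g.map f).sum := by
  induction g using Multiset.induction_on with
  | empty => simp [genMeasure]
  | cons a g ih => simp [genMeasure_cons, lintegral_add_measure, lintegral_dirac' a hf, ih]

open Classical in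
lemma genMeasure_apply (g : Multiset E) {A : Set E} (hA : MeasurableSet A) :
    genMeasure g A = g.countP (· ∈ A) := by
  induction g using Multiset.induction_on with
  | empty => simp [genMeasure]
  | cons a g ih =>
    by_cases ha : a ∈ A <;> simp_all [genMeasure_cons, add_comm]

lemma measurable_genMeasure : Measurable (genMeasure : Multiset E → Measure E) := by
  classical
  refine Measure.measurable_of_measurable_coe _ fun A hA => ?_
  simp_rw [genMeasure_apply _ hA]
  refine measurable_from_top.comp (measurable_to_countable' fun n => ?_)
  have h : (fun g : Multiset E => g.countP (· ∈ A)) ⁻¹' {n} = {g | gMass g A = n} := by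
    ext g
    simp [gMass_eq_countP]
  exact h ▸ MeasurableSpace.measurableSet_generateFrom ⟨A, n, hA, rfl⟩

lemma ofReal_gInt (g : Multiset E) {σ : E → ℝ} (hσm : Measurable σ) (hσ : ∀ m, 0 ≤ σ m) :
    ENNReal.ofReal (gInt g σ) = ∫⁻ x, ENNReal.ofReal (σ x) ∂genMeasure g := by
  rw [lintegral_genMeasure g hσm.ennreal_ofReal]
  induction g using Multiset.induction_on with
  | empty => simp [gInt]
  | cons a g ih =>
    rw [← Multiset.singleton_add, gInt_add, gInt_singleton,
      ENNReal.ofReal_add (hσ a) (gInt_nonneg g hσ), ih]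
    simp

lemma measurable_gInt {σ : E → ℝ} (hσm : Measurable σ) (hσ : ∀ m, 0 ≤ σ m) :
    Measurable fun g : Multiset E => gInt g σ := by
  have h : (fun g : Multiset E => gInt g σ)
      = fun g => (∫⁻ x, ENNReal.ofReal (σ x) ∂genMeasure g).toReal := by
    ext g
    rw [← ofReal_gInt g hσm hσ, ENNReal.toReal_ofReal (gInt_nonneg g hσ)]
  rw [h]
  exact ((Measure.measurable_lintegral hσm.ennreal_ofReal).comp
    measurable_genMeasure).ennreal_toReal

lemma measurable_sum_singleton (k : ℕ) :
    Measurable fun x : Fin k → E => ∑ i, ({x i} : Multiset E) := by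
  refine measurable_generateFrom ?_
  rintro _ ⟨A, n, hA, rfl⟩
  have h : (fun x : Fin k → E => ∑ i, ({x i} : Multiset E)) ⁻¹' {g | gMass g A = n}
      = (fun x : Fin k → E => ∑ i, A.indicator 1 (x i)) ⁻¹' {(n : ℝ)} := by
    ext x
    simp [gMass, gInt_finsetSum, gInt_singleton]
  rw [h]
  exact (Finset.measurable_sum _ fun i _ =>
    (measurable_one.indicator hA).comp (measurable_pi_apply i)) (measurableSet_singleton _)

end Genotype

open scoped Nat

section Poisson

variable {E : Type*} [MeasurableSpace E]

lemma lintegral_pi_prod_eq_pow (π : Measure E) [SigmaFinite π] {f : E → ℝ≥0∞}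
    (hf : Measurable f) (k : ℕ) :
    ∫⁻ x : Fin k → E, ∏ i, f (x i) ∂Measure.pi (fun _ => π) =
      (∫⁻ m, f m ∂π) ^ k := by
  induction k with
  | zero => simp
  | succ k ih =>
    calc ∫⁻ x : Fin (k + 1) → E, ∏ i, f (x i) ∂Measure.pi (fun _ => π)
        = ∫⁻ p : E × (Fin k → E), f p.1 * ∏ i, f (p.2 i)
            ∂π.prod (Measure.pi fun _ => π) := by
          rw [← ((measurePreserving_piFinSuccAbove (fun _ => π) 0).symm).lintegral_comp_emb
            (MeasurableEquiv.measurableEmbedding _)]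
          simp_rw [MeasurableEquiv.piFinSuccAbove_symm_apply, Fin.insertNthEquiv,
            Fin.prod_univ_succ, Fin.insertNth_zero]
          simp
      _ = (∫⁻ m, f m ∂π) ^ (k + 1) := by
          rw [lintegral_prod_mul (g := fun x : Fin k → E => ∏ i, f (x i)) hf.aemeasurable
            (Finset.measurable_prod _ fun i _ => hf.comp (measurable_pi_apply i)).aemeasurable,
            ih, pow_succ']

lemma tsum_inv_factorial_mul_pow {a : ℝ≥0∞} (ha : a ≠ ⊤) :
    ∑' k : ℕ, (k ! : ℝ≥0∞)⁻¹ * a ^ k = ENNReal.ofReal (Real.exp a.toReal) := by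
  have hterm (k : ℕ) : (k ! : ℝ≥0∞)⁻¹ * a ^ k = ENNReal.ofReal (a.toReal ^ k / k !) := by
    rw [ENNReal.ofReal_div_of_pos (by positivity), ENNReal.ofReal_pow ENNReal.toReal_nonneg,
      ENNReal.ofReal_toReal ha, ENNReal.ofReal_natCast, ENNReal.div_eq_inv_mul]
  rw [tsum_congr hterm, ← ENNReal.ofReal_tsum_of_nonneg (fun k => by positivity)
    (Real.summable_pow_div_factorial _), Real.exp_eq_exp_ℝ, NormedSpace.exp_eq_tsum_div]

lemma lintegral_poissonLaw (π : Measure E) {F : Multiset E → ℝ≥0∞} (hF : Measurable F) :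
    ∫⁻ g, F g ∂poissonLaw π = ENNReal.ofReal (Real.exp (-(π univ).toReal)) *
      ∑' k : ℕ, (k ! : ℝ≥0∞)⁻¹ *
        ∫⁻ x : Fin k → E, F (∑ i, {x i}) ∂Measure.pi (fun _ => π) := by
  simp_rw [poissonLaw, lintegral_smul_measure, lintegral_sum_measure, lintegral_smul_measure,
    lintegral_map hF (measurable_sum_singleton _), smul_eq_mul]

lemma lintegral_exp_neg_gInt_poissonLaw (π : Measure E) [IsFiniteMeasure π] {σ : E → ℝ}
    (hσm : Measurable σ) (hσ : ∀ m, 0 ≤ σ m) :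
    ∫⁻ g, ENNReal.ofReal (Real.exp (-gInt g σ)) ∂poissonLaw π =
      ENNReal.ofReal (Real.exp (-(∫⁻ m, ENNReal.ofReal (1 - Real.exp (-σ m)) ∂π).toReal)) := by
  set a := ∫⁻ m, ENNReal.ofReal (Real.exp (-σ m)) ∂π
  have hexp : Measurable fun m => ENNReal.ofReal (Real.exp (-σ m)) :=
    hσm.neg.exp.ennreal_ofReal
  have hsum : a + ∫⁻ m, ENNReal.ofReal (1 - Real.exp (-σ m)) ∂π = π univ := by
    rw [← lintegral_add_left hexp, ← lintegral_one]
    refine lintegral_congr fun m => ?_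
    rw [← ENNReal.ofReal_add (Real.exp_pos _).le
      (sub_nonneg.2 (Real.exp_le_one_iff.2 (neg_nonpos.2 (hσ m)))), add_sub_cancel,
      ENNReal.ofReal_one]
  have hmoment (k : ℕ) :
      ∫⁻ x : Fin k → E, ENNReal.ofReal (Real.exp (-gInt (∑ i, {x i}) σ))
        ∂Measure.pi (fun _ => π) = a ^ k := by
    simp_rw [gInt_finsetSum, gInt_singleton, ← Finset.sum_neg_distrib, Real.exp_sum,
      ENNReal.ofReal_prod_of_nonneg fun _ _ => (Real.exp_pos _).le]
    exact lintegral_pi_prod_eq_pow π hexp k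
  have ha : a ≠ ⊤ := ne_top_of_le_ne_top (measure_ne_top π univ) (hsum ▸ le_self_add)
  have hw : ∫⁻ m, ENNReal.ofReal (1 - Real.exp (-σ m)) ∂π ≠ ⊤ :=
    ne_top_of_le_ne_top (measure_ne_top π univ) (hsum ▸ le_add_self)
  rw [lintegral_poissonLaw π (F := fun g => ENNReal.ofReal (Real.exp (-gInt g σ)))
    (measurable_gInt hσm hσ).neg.exp.ennreal_ofReal]
  simp_rw [hmoment]
  rw [tsum_inv_factorial_mul_pow ha, ← ENNReal.ofReal_mul (Real.exp_pos _).le, ← Real.exp_add,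
    ← hsum, ENNReal.toReal_add ha hw]
  congr 2
  ring

end Poisson

section MultiplicativeCost

variable {E : Type*} {σ : E → ℝ}

lemma multCost_add_singleton_sub (g : Multiset E) (x : E) :
    multCost σ (g + {x}) - multCost σ g = (1 - Real.exp (-σ x)) * Real.exp (-gInt g σ) := by
  simp only [multCost, gInt_add, gInt_singleton, neg_add, Real.exp_add]
  ring

variable [MeasurableSpace E]

lemma Fcost_multCost (hσm : Measurable σ) (hσ : ∀ m, 0 ≤ σ m) (π : Measure E)
    [IsFiniteMeasure π] (x : E) :
    Fcost (multCost σ) π x = (1 - Real.exp (-σ x)) *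
      Real.exp (-(∫⁻ m, ENNReal.ofReal (1 - Real.exp (-σ m)) ∂π).toReal) := by
  have hexp : Measurable fun g : Multiset E => Real.exp (-gInt g σ) :=
    (measurable_gInt hσm hσ).neg.exp
  rw [Fcost]
  simp_rw [multCost_add_singleton_sub]
  rw [integral_const_mul, integral_eq_lintegral_of_nonneg_ae
    (.of_forall fun _ => (Real.exp_pos _).le) hexp.aestronglyMeasurable,
    lintegral_exp_neg_gInt_poissonLaw π hσm hσ, ENNReal.toReal_ofReal (Real.exp_pos _).le]

lemma Dop_multCost (hσm : Measurable σ) (hσ : ∀ m, 0 ≤ σ m) (ρ : Measure E)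
    [IsFiniteMeasure ρ] :
    Dop (multCost σ) ρ =
      ENNReal.ofReal (Real.exp (-(∫⁻ m, ENNReal.ofReal (1 - Real.exp (-σ m)) ∂ρ).toReal)) •
        ρ.withDensity fun m => ENNReal.ofReal (1 - Real.exp (-σ m)) := by
  rw [Dop, ← withDensity_smul' _ _ ENNReal.ofReal_ne_top]
  congr 1
  ext x
  rw [Fcost_multCost hσm hσ, mul_comm, ENNReal.ofReal_mul (Real.exp_pos _).le]
  rfl

lemma lintegral_inv_Dop_multCost_lt_top (hσm : Measurable σ) (hσ : ∀ m, 0 ≤ σ m)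
    (ρ : Measure E) [IsFiniteMeasure ρ] :
    ∫⁻ m, (ENNReal.ofReal (1 - Real.exp (-σ m)))⁻¹ ∂Dop (multCost σ) ρ < ⊤ := by
  set w : E → ℝ≥0∞ := fun m => ENNReal.ofReal (1 - Real.exp (-σ m))
  have hw : Measurable w := (measurable_const.sub hσm.neg.exp).ennreal_ofReal
  rw [Dop_multCost hσm hσ, lintegral_smul_measure,
    lintegral_withDensity_eq_lintegral_mul (g := fun m => (w m)⁻¹) _ hw hw.inv]
  calc _ ≤ ENNReal.ofReal (Real.exp _) * ∫⁻ _, 1 ∂ρ :=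
        mul_le_mul_right (lintegral_mono fun _ => ENNReal.mul_inv_le_one _) _
    _ < ⊤ := by simpa using ENNReal.mul_lt_top ENNReal.ofReal_lt_top (measure_lt_top ρ univ)

lemma Dop_multCost_univ_le (hσm : Measurable σ) (hσ : ∀ m, 0 ≤ σ m) (ρ : Measure E)
    [IsFiniteMeasure ρ] :
    (Dop (multCost σ) ρ univ).toReal ≤ Real.exp (-1) := by
  rw [Dop_multCost hσm hσ, Measure.smul_apply, withDensity_apply _ MeasurableSet.univ,
    Measure.restrict_univ, smul_eq_mul, ENNReal.toReal_mul,
    ENNReal.toReal_ofReal (Real.exp_pos _).le, mul_comm]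
  exact Real.mul_exp_neg_le_exp_neg_one _

lemma isFiniteMeasure_withDensity_const_mul {μ : Measure E} {f : E → ℝ≥0∞}
    (hf : ∫⁻ m, f m ∂μ ≠ ⊤) {r : ℝ≥0∞} (hr : r ≠ ⊤) :
    IsFiniteMeasure (μ.withDensity fun m => r * f m) :=
  isFiniteMeasure_withDensity (by rw [lintegral_const_mul' _ _ hr]; exact ENNReal.mul_ne_top hr hf)

lemma Dop_multCost_withDensity (hσm : Measurable σ) (hσ : ∀ m, 0 ≤ σ m) {ν : Measure E}
    (hν : ∫⁻ m, (ENNReal.ofReal (1 - Real.exp (-σ m)))⁻¹ ∂ν < ⊤) {c : ℝ}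
    (hc : c * Real.exp (-c) = (ν univ).toReal) :
    Dop (multCost σ) (ν.withDensity fun m =>
      ENNReal.ofReal (Real.exp c) * (ENNReal.ofReal (1 - Real.exp (-σ m)))⁻¹) = ν := by
  set w : E → ℝ≥0∞ := fun m => ENNReal.ofReal (1 - Real.exp (-σ m))
  have hw : Measurable w := (measurable_const.sub hσm.neg.exp).ennreal_ofReal
  have := isFiniteMeasure_withDensity_const_mul hν.ne (ENNReal.ofReal_ne_top (r := Real.exp c))
  have hρw : (ν.withDensity fun m => ENNReal.ofReal (Real.exp c) * (w m)⁻¹).withDensity w =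
      ENNReal.ofReal (Real.exp c) • ν := by
    rw [show (fun m => ENNReal.ofReal (Real.exp c) * (w m)⁻¹) =
        ENNReal.ofReal (Real.exp c) • fun m => (w m)⁻¹ from rfl,
      withDensity_smul' _ _ ENNReal.ofReal_ne_top, withDensity_smul_measure]
    congr 1
    simpa only [inv_inv] using withDensity_inv_same (f := fun m => (w m)⁻¹) hw.inv
      (.of_forall fun m => ENNReal.inv_ne_zero.2 ENNReal.ofReal_ne_top)
      (ae_lt_top hw.inv hν.ne |>.mono fun _ => ne_of_lt)
  have ht : (∫⁻ m, w m ∂ν.withDensity fun m => ENNReal.ofReal (Real.exp c) * (w m)⁻¹).toReal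
      = c := by
    rw [← setLIntegral_univ, ← withDensity_apply _ MeasurableSet.univ, hρw, Measure.smul_apply,
      smul_eq_mul, ENNReal.toReal_mul, ENNReal.toReal_ofReal (Real.exp_pos _).le, ← hc,
      mul_left_comm, ← Real.exp_add, add_neg_cancel, Real.exp_zero, mul_one]
  rw [Dop_multCost hσm hσ, ht, hρw, smul_smul, ← ENNReal.ofReal_mul (Real.exp_pos _).le,
    ← Real.exp_add, neg_add_cancel, Real.exp_zero, ENNReal.ofReal_one, one_smul]

lemma exists_mul_exp_neg_eq {y : ℝ} (hy₀ : 0 ≤ y) (hy₁ : y ≤ Real.exp (-1)) :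
    ∃ c, c * Real.exp (-c) = y := by
  have hcont : ContinuousOn (fun c : ℝ => c * Real.exp (-c)) (Icc 0 1) := by fun_prop
  obtain ⟨c, -, hc⟩ :=
    intermediate_value_Icc zero_le_one hcont ⟨by simpa using hy₀, by simpa using hy₁⟩
  exact ⟨c, hc⟩

end MultiplicativeCost

set_option linter.unusedSectionVars false in
theorem multiplicative_equilibria_general (ν : Measure M)
    (σc : M → ℝ) (hσm : Measurable σc) (hσ0 : ∀ m, 0 ≤ σc m) :
    ((∃ ρ : Measure M, IsFiniteMeasure ρ ∧
        ∀ A : Set M, MeasurableSet A → ν A = (Dop (multCost σc) ρ) A) ↔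
      (∫⁻ m, (ENNReal.ofReal (1 - Real.exp (-σc m)))⁻¹ ∂ν < ⊤ ∧
        (ν Set.univ).toReal ≤ Real.exp (-1))) ∧
    ((∫⁻ m, (ENNReal.ofReal (1 - Real.exp (-σc m)))⁻¹ ∂ν < ⊤) →
      (ν Set.univ).toReal ≤ Real.exp (-1) →
      ∀ c : ℝ, 0 < c → c * Real.exp (-c) = (ν Set.univ).toReal →
        ∀ A : Set M, MeasurableSet A →
          ν A = (Dop (multCost σc)
            (ν.withDensity fun m =>
              ENNReal.ofReal (Real.exp c) *
                (ENNReal.ofReal (1 - Real.exp (-σc m)))⁻¹)) A) := by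
  refine ⟨⟨?_, ?_⟩, fun hν _ c _ hc A _ => by rw [Dop_multCost_withDensity hσm hσ0 hν hc]⟩
  · rintro ⟨ρ, _, hνρ⟩
    obtain rfl : ν = Dop (multCost σc) ρ := Measure.ext hνρ
    exact ⟨lintegral_inv_Dop_multCost_lt_top hσm hσ0 ρ, Dop_multCost_univ_le hσm hσ0 ρ⟩
  · rintro ⟨hν, hle⟩
    obtain ⟨c, hc⟩ := exists_mul_exp_neg_eq ENNReal.toReal_nonneg hle
    exact ⟨_, isFiniteMeasure_withDensity_const_mul hν.ne ENNReal.ofReal_ne_top,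
      fun A _ => by rw [Dop_multCost_withDensity hσm hσ0 hν hc]⟩

theorem multiplicative_equilibria (ν : Measure M) [IsFiniteMeasure ν]
    (hν : 0 < (ν Set.univ).toReal)
    (σc : M → ℝ) (hσm : Measurable σc) (hσ0 : ∀ m, 0 ≤ σc m) :
    ((∃ ρ : Measure M, IsFiniteMeasure ρ ∧
        ∀ A : Set M, MeasurableSet A → ν A = (Dop (multCost σc) ρ) A) ↔
      (∫⁻ m, (ENNReal.ofReal (1 - Real.exp (-σc m)))⁻¹ ∂ν < ⊤ ∧
        (ν Set.univ).toReal ≤ Real.exp (-1))) ∧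
    ((∫⁻ m, (ENNReal.ofReal (1 - Real.exp (-σc m)))⁻¹ ∂ν < ⊤) →
      (ν Set.univ).toReal ≤ Real.exp (-1) →
      ∀ c : ℝ, 0 < c → c * Real.exp (-c) = (ν Set.univ).toReal →
        ∀ A : Set M, MeasurableSet A →
          ν A = (Dop (multCost σc)
            (ν.withDensity fun m =>
              ENNReal.ofReal (Real.exp c) *
                (ENNReal.ofReal (1 - Real.exp (-σc m)))⁻¹)) A) :=
  multiplicative_equilibria_general ν σc hσm hσ0

end MSEW
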